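/- arXiv:2011.00888 — 7 statements merged into one kernel-verified Lean document; each statement's English description precedes it below -/
import Mathlib

section
/- Suppose ε > 0, φ ∈ [0,1], H(φ) ∈ [0,1], H satisfies U(H(x)) = U(x) + ε for all x in a neighborhood of φ, and H is differentiable at φ. Then the derivative of H at φ is strictly greater than 1 (Lemma 1: sub-threshold pulse reception expands phase differences). -/
/-! Differentiating `U ∘ H = U + ε` gives `U'(H φ) · H'(φ) = U'(φ)`. Since `U` is increasing and
`ε > 0`, the pulse advances the phase, `φ < H φ`; since `U` is concave, `U'` is decreasing, so
`U'(H φ) < U'(φ)` and hence `H'(φ) = U'(φ) / U'(H φ) > 1`. -/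

open Filter Topology

theorem deriv_comp_mul_deriv_eq_of_comp_eventuallyEq_add_const {U H : ℝ → ℝ} {x c : ℝ}
    (hU : DifferentiableAt ℝ U (H x)) (hH : DifferentiableAt ℝ H x)
    (hrel : (fun y ↦ U (H y)) =ᶠ[𝓝 x] fun y ↦ U y + c) :
    deriv U (H x) * deriv H x = deriv U x := by
  calc deriv U (H x) * deriv H x = deriv (U ∘ H) x := (deriv_comp x hU hH).symm
    _ = deriv (fun y ↦ U y + c) x := hrel.deriv_eq
    _ = deriv U x := deriv_add_const c

theorem one_lt_deriv_of_comp_eventuallyEq_add_const {U H : ℝ → ℝ} {s : Set ℝ} {x c : ℝ}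
    (hmono : StrictMonoOn U s) (hanti : StrictAntiOn (deriv U) s) (hpos : 0 < deriv U (H x))
    (hx : x ∈ s) (hHx : H x ∈ s) (hc : 0 < c)
    (hU : DifferentiableAt ℝ U (H x)) (hH : DifferentiableAt ℝ H x)
    (hrel : (fun y ↦ U (H y)) =ᶠ[𝓝 x] fun y ↦ U y + c) :
    1 < deriv H x := by
  have hadvance : x < H x := (hmono.lt_iff_lt hx hHx).mp (by linarith [hrel.eq_of_nhds])
  have hslope : deriv U (H x) < deriv U x := hanti hx hHx hadvance
  rw [← deriv_comp_mul_deriv_eq_of_comp_eventuallyEq_add_const hU hH hrel] at hslope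
  exact (lt_mul_iff_one_lt_right hpos).mp hslope

theorem subthreshold_deriv_gt_one_general
    (U H : ℝ → ℝ) (ε φ : ℝ)
    (hU : ContDiff ℝ 2 U)
    (hU' : ∀ x ∈ Set.Icc (0:ℝ) 1, 0 < deriv U x)
    (hU'' : ∀ x ∈ Set.Icc (0:ℝ) 1, deriv (deriv U) x < 0)
    (hε : 0 < ε)
    (hφ : φ ∈ Set.Icc (0:ℝ) 1)
    (hHφ : H φ ∈ Set.Icc (0:ℝ) 1)
    (hrel : ∀ᶠ x in nhds φ, U (H x) = U x + ε)
    (hdiff : DifferentiableAt ℝ H φ) :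
    1 < deriv H φ := by
  have hUdiff : Differentiable ℝ U := hU.differentiable two_ne_zero
  have hmono : StrictMonoOn U (Set.Icc 0 1) :=
    strictMonoOn_of_deriv_pos (convex_Icc 0 1) hUdiff.continuous.continuousOn
      fun x hx ↦ hU' x (interior_subset hx)
  have hanti : StrictAntiOn (deriv U) (Set.Icc 0 1) :=
    strictAntiOn_of_deriv_neg (convex_Icc 0 1) (hU.continuous_deriv one_le_two).continuousOn
      fun x hx ↦ hU'' x (interior_subset hx)
  exact one_lt_deriv_of_comp_eventuallyEq_add_const hmono hanti (hU' _ hHφ) hφ hHφ hε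
    (hUdiff _) hdiff hrel

/-- Lemma 1: sub-threshold pulse reception expands phase differences.
If `ε > 0`, `φ ∈ [0,1]`, `H φ ∈ [0,1]`, `H` satisfies `U (H x) = U x + ε` for all `x`
in a neighborhood of `φ`, and `H` is differentiable at `φ`, then `deriv H φ > 1`. -/
theorem subthreshold_deriv_gt_one
    (U H : ℝ → ℝ) (ε φ : ℝ)
    (hU : ContDiff ℝ 2 U) (hU0 : U 0 = 0) (hU1 : U 1 = 1)
    (hU' : ∀ x ∈ Set.Icc (0:ℝ) 1, 0 < deriv U x)
    (hU'' : ∀ x ∈ Set.Icc (0:ℝ) 1, deriv (deriv U) x < 0)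
    (hε : 0 < ε)
    (hφ : φ ∈ Set.Icc (0:ℝ) 1)
    (hHφ : H φ ∈ Set.Icc (0:ℝ) 1)
    (hrel : ∀ᶠ x in nhds φ, U (H x) = U x + ε)
    (hdiff : DifferentiableAt ℝ H φ) :
    1 < deriv H φ :=
  subthreshold_deriv_gt_one_general U H ε φ hU hU' hU'' hε hφ hHφ hrel hdiff
end

section
/- Suppose ε > 0, φ₁ < φ₂ with φ₁, φ₂ ∈ [0,1], and h₁, h₂ ∈ [0,1] satisfy U(h₁) = U(φ₁) + ε and U(h₂) = U(φ₂) + ε. Then h₁ − φ₁ < h₂ − φ₂: the phase advance caused by a sub-threshold pulse is strictly larger for oscillators at larger phase. -/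
/-!
Let `d = h₂ - φ₂`, which is positive because `U` is increasing. Strict concavity makes the
increment `U (x + d) - U x` strictly decreasing in `x`, so `U (φ₁ + d) - U φ₁ > U h₂ - U φ₂ = ε`.
Since `U h₁ - U φ₁ = ε` and `U` is increasing, `h₁ < φ₁ + d`.
-/

open Set

/-- Both `x + d` and `y` lie strictly inside `[x, y + d]`, at mirror-image positions, so the two
concavity inequalities add up to the claim. -/
theorem StrictConcaveOn.sub_lt_sub_of_lt {f : ℝ → ℝ} {s : Set ℝ} (hf : StrictConcaveOn ℝ s f)
    {x y d : ℝ} (hx : x ∈ s) (hyd : y + d ∈ s) (hxy : x < y) (hd : 0 < d) :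
    f (y + d) - f y < f (x + d) - f x := by
  have hL : 0 < y + d - x := by linarith
  set t := d / (y + d - x) with ht
  have ht0 : 0 < t := div_pos hd hL
  have ht1 : 0 < 1 - t := by
    rw [ht, sub_pos, div_lt_one hL]
    linarith
  have hne : x ≠ y + d := by linarith
  have hxd := hf.2 hx hyd hne ht1 ht0 (by ring)
  have hy := hf.2 hx hyd hne ht0 ht1 (by ring)
  have hxd_eq : (1 - t) • x + t • (y + d) = x + d := by
    simp only [smul_eq_mul, ht]
    field_simp
    ring
  have hy_eq : t • x + (1 - t) • (y + d) = y := by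
    simp only [smul_eq_mul, ht]
    field_simp
    ring
  rw [hxd_eq] at hxd
  rw [hy_eq] at hy
  simp only [smul_eq_mul] at hxd hy
  linarith

theorem StrictConcaveOn.sub_lt_sub_of_apply_eq_add {f : ℝ → ℝ} {s : Set ℝ}
    (hconc : StrictConcaveOn ℝ s f) (hmono : StrictMonoOn f s) {ε φ₁ φ₂ h₁ h₂ : ℝ} (hε : 0 < ε)
    (hφ₁ : φ₁ ∈ s) (hφ₂ : φ₂ ∈ s) (hφ : φ₁ < φ₂) (hh₁ : h₁ ∈ s) (hh₂ : h₂ ∈ s)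
    (hrel₁ : f h₁ = f φ₁ + ε) (hrel₂ : f h₂ = f φ₂ + ε) :
    h₁ - φ₁ < h₂ - φ₂ := by
  have hd : 0 < h₂ - φ₂ := sub_pos.2 <| (hmono.lt_iff_lt hφ₂ hh₂).1 (by linarith)
  by_contra! hle
  have hmem : φ₁ + (h₂ - φ₂) ∈ s :=
    hconc.1.ordConnected.out hφ₁ hh₁ ⟨by linarith, by linarith⟩
  have hinc := hconc.sub_lt_sub_of_lt hφ₁ (by rwa [add_sub_cancel]) hφ hd
  rw [add_sub_cancel] at hinc
  have hle' := hmono.monotoneOn hmem hh₁ (by linarith)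
  linarith

theorem pulse_advance_strictMono_general
    (U : ℝ → ℝ) (ε φ₁ φ₂ h₁ h₂ : ℝ)
    (hU : ContDiff ℝ 2 U)
    (hU' : ∀ x ∈ Set.Icc (0:ℝ) 1, 0 < deriv U x)
    (hU'' : ∀ x ∈ Set.Icc (0:ℝ) 1, deriv (deriv U) x < 0)
    (hε : 0 < ε)
    (hφ₁ : φ₁ ∈ Set.Icc (0:ℝ) 1) (hφ₂ : φ₂ ∈ Set.Icc (0:ℝ) 1)
    (hφ : φ₁ < φ₂)
    (hh₁ : h₁ ∈ Set.Icc (0:ℝ) 1) (hh₂ : h₂ ∈ Set.Icc (0:ℝ) 1)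
    (hrel₁ : U h₁ = U φ₁ + ε)
    (hrel₂ : U h₂ = U φ₂ + ε) :
    h₁ - φ₁ < h₂ - φ₂ := by
  have hcont : ContinuousOn U (Icc 0 1) := hU.continuous.continuousOn
  have hmono : StrictMonoOn U (Icc 0 1) :=
    strictMonoOn_of_deriv_pos (convex_Icc 0 1) hcont fun x hx => hU' x (interior_subset hx)
  have hconc : StrictConcaveOn ℝ (Icc 0 1) U :=
    strictConcaveOn_of_deriv2_neg' (convex_Icc 0 1) hcont hU''
  exact hconc.sub_lt_sub_of_apply_eq_add hmono hε hφ₁ hφ₂ hφ hh₁ hh₂ hrel₁ hrel₂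

/-- The phase advance caused by a sub-threshold pulse is strictly larger for oscillators at
larger phase: if `φ₁ < φ₂` and `U h₁ = U φ₁ + ε`, `U h₂ = U φ₂ + ε` with all phases in `[0,1]`,
then `h₁ - φ₁ < h₂ - φ₂`. -/
theorem pulse_advance_strictMono
    (U : ℝ → ℝ) (ε φ₁ φ₂ h₁ h₂ : ℝ)
    (hU : ContDiff ℝ 2 U) (hU0 : U 0 = 0) (hU1 : U 1 = 1)
    (hU' : ∀ x ∈ Set.Icc (0:ℝ) 1, 0 < deriv U x)
    (hU'' : ∀ x ∈ Set.Icc (0:ℝ) 1, deriv (deriv U) x < 0)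
    (hε : 0 < ε)
    (hφ₁ : φ₁ ∈ Set.Icc (0:ℝ) 1) (hφ₂ : φ₂ ∈ Set.Icc (0:ℝ) 1)
    (hφ : φ₁ < φ₂)
    (hh₁ : h₁ ∈ Set.Icc (0:ℝ) 1) (hh₂ : h₂ ∈ Set.Icc (0:ℝ) 1)
    (hrel₁ : U h₁ = U φ₁ + ε)
    (hrel₂ : U h₂ = U φ₂ + ε) :
    h₁ - φ₁ < h₂ - φ₂ :=
  pulse_advance_strictMono_general U ε φ₁ φ₂ h₁ h₂ hU hU' hU'' hε hφ₁ hφ₂ hφ hh₁ hh₂ hrel₁ hrel₂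
end

section
/- Let ε > 0 and τ ∈ (0,1). Suppose H_ε and H_{2ε} are differentiable at the points where they are evaluated below, satisfy their defining relations U(H_μ(x)) = U(x) + μ in neighborhoods of those points, and all reception events involved are sub-threshold (i.e. the points τ, H_ε(τ), τ + H_{2ε}(τ) and their images lie in [0,1]). Then the first nonzero eigenvalue of the Jacobian of the return map of the S₃×S₂ cluster periodic orbit, λ₁ = (−1 + (1 + H_ε'(τ))·H_ε'(H_ε(τ)))·H_{2ε}'(τ + H_{2ε}(τ)), is strictly greater than 1. -/
open Filter Topology Set

/-- Differentiating `U ∘ H = U + μ` at `x` gives `U'(H x) · H'(x) = U'(x)`, and `U'(H x) < U'(x)`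
because `H x > x` and `U'` is decreasing. -/
lemma one_lt_deriv_of_comp_eq_add {U H : ℝ → ℝ} {D : Set ℝ} {μ x : ℝ}
    (hUmono : StrictMonoOn U D) (hU'anti : StrictAntiOn (deriv U) D)
    (hU'pos : 0 < deriv U (H x)) (hUd : DifferentiableAt ℝ U (H x))
    (hμ : 0 < μ) (hx : x ∈ D) (hHx : H x ∈ D)
    (hrel : ∀ᶠ y in 𝓝 x, U (H y) = U y + μ) (hd : DifferentiableAt ℝ H x) :
    1 < deriv H x := by
  have hlt : x < H x := by
    rw [← hUmono.lt_iff_lt hx hHx, hrel.self_of_nhds]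
    linarith
  have hchain : deriv U (H x) * deriv H x = deriv U x := by
    have hcomp : (U ∘ H) =ᶠ[𝓝 x] fun y => U y + μ := hrel
    rw [← deriv_comp x hUd hd, hcomp.deriv_eq, deriv_add_const]
  have hdec : deriv U (H x) < deriv U x := hU'anti hx hHx hlt
  nlinarith

theorem s3s2_eigenvalue_one_gt_one_general
    (U Hε H2ε : ℝ → ℝ) (ε τ : ℝ)
    (hU : ContDiff ℝ 2 U)
    (hU' : ∀ x ∈ Set.Icc (0:ℝ) 1, 0 < deriv U x)
    (hU'' : ∀ x ∈ Set.Icc (0:ℝ) 1, deriv (deriv U) x < 0)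
    (hε : 0 < ε) (hτ : τ ∈ Set.Ioo (0:ℝ) 1)
    -- defining relations in neighborhoods of the evaluation points
    (hrel1 : ∀ᶠ x in nhds τ, U (Hε x) = U x + ε)
    (hrel2 : ∀ᶠ x in nhds (Hε τ), U (Hε x) = U x + ε)
    (hrel4 : ∀ᶠ x in nhds (τ + H2ε τ), U (H2ε x) = U x + 2 * ε)
    -- all reception events are sub-threshold: points and images lie in [0,1]
    (hm1 : Hε τ ∈ Set.Icc (0:ℝ) 1)
    (hm2 : Hε (Hε τ) ∈ Set.Icc (0:ℝ) 1)
    (hm4 : τ + H2ε τ ∈ Set.Icc (0:ℝ) 1)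
    (hm5 : H2ε (τ + H2ε τ) ∈ Set.Icc (0:ℝ) 1)
    -- differentiability at the evaluation points
    (hd1 : DifferentiableAt ℝ Hε τ)
    (hd2 : DifferentiableAt ℝ Hε (Hε τ))
    (hd3 : DifferentiableAt ℝ H2ε (τ + H2ε τ)) :
    1 < (-1 + (1 + deriv Hε τ) * deriv Hε (Hε τ)) * deriv H2ε (τ + H2ε τ) := by
  have hUd : Differentiable ℝ U := hU.differentiable (by norm_num)
  have hmono : StrictMonoOn U (Icc 0 1) :=
    strictMonoOn_of_deriv_pos (convex_Icc 0 1) hUd.continuous.continuousOn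
      fun y hy => hU' y (interior_subset hy)
  have hanti : StrictAntiOn (deriv U) (Icc 0 1) :=
    strictAntiOn_of_deriv_neg (convex_Icc 0 1) (hU.iterate_deriv' 1 1).continuous.continuousOn
      fun y hy => hU'' y (interior_subset hy)
  have ha : 1 < deriv Hε τ := one_lt_deriv_of_comp_eq_add hmono hanti (hU' _ hm1) (hUd _) hε
    (Ioo_subset_Icc_self hτ) hm1 hrel1 hd1
  have hb : 1 < deriv Hε (Hε τ) := one_lt_deriv_of_comp_eq_add hmono hanti (hU' _ hm2) (hUd _) hε
    hm1 hm2 hrel2 hd2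
  have hc : 1 < deriv H2ε (τ + H2ε τ) := one_lt_deriv_of_comp_eq_add hmono hanti (hU' _ hm5)
    (hUd _) (by positivity) hm4 hm5 hrel4 hd3
  have hfirst : 1 < -1 + (1 + deriv Hε τ) * deriv Hε (Hε τ) := by nlinarith
  exact one_lt_mul_of_lt_of_le hfirst hc.le

/-- The first nonzero eigenvalue of the Jacobian of the return map of the `S₃ × S₂` cluster
periodic orbit, `λ₁ = (-1 + (1 + Hε'(τ)) Hε'(Hε(τ))) H2ε'(τ + H2ε(τ))`, is strictly
greater than 1. -/
theorem s3s2_eigenvalue_one_gt_one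
    (U Hε H2ε : ℝ → ℝ) (ε τ : ℝ)
    (hU : ContDiff ℝ 2 U) (hU0 : U 0 = 0) (hU1 : U 1 = 1)
    (hU' : ∀ x ∈ Set.Icc (0:ℝ) 1, 0 < deriv U x)
    (hU'' : ∀ x ∈ Set.Icc (0:ℝ) 1, deriv (deriv U) x < 0)
    (hε : 0 < ε) (hτ : τ ∈ Set.Ioo (0:ℝ) 1)
    -- defining relations in neighborhoods of the evaluation points
    (hrel1 : ∀ᶠ x in nhds τ, U (Hε x) = U x + ε)
    (hrel2 : ∀ᶠ x in nhds (Hε τ), U (Hε x) = U x + ε)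
    (hrel3 : ∀ᶠ x in nhds τ, U (H2ε x) = U x + 2 * ε)
    (hrel4 : ∀ᶠ x in nhds (τ + H2ε τ), U (H2ε x) = U x + 2 * ε)
    -- all reception events are sub-threshold: points and images lie in [0,1]
    (hm1 : Hε τ ∈ Set.Icc (0:ℝ) 1)
    (hm2 : Hε (Hε τ) ∈ Set.Icc (0:ℝ) 1)
    (hm3 : H2ε τ ∈ Set.Icc (0:ℝ) 1)
    (hm4 : τ + H2ε τ ∈ Set.Icc (0:ℝ) 1)
    (hm5 : H2ε (τ + H2ε τ) ∈ Set.Icc (0:ℝ) 1)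
    -- differentiability at the evaluation points
    (hd1 : DifferentiableAt ℝ Hε τ)
    (hd2 : DifferentiableAt ℝ Hε (Hε τ))
    (hd3 : DifferentiableAt ℝ H2ε (τ + H2ε τ)) :
    1 < (-1 + (1 + deriv Hε τ) * deriv Hε (Hε τ)) * deriv H2ε (τ + H2ε τ) :=
  s3s2_eigenvalue_one_gt_one_general U Hε H2ε ε τ hU hU' hU'' hε hτ hrel1 hrel2 hrel4 hm1 hm2 hm4
    hm5 hd1 hd2 hd3
end

section
/- Let ε > 0 and τ ∈ (0,1). Suppose H_ε, H_{2ε}, H_{3ε} are differentiable at the points where they are evaluated below, satisfy their defining relations U(H_μ(x)) = U(x) + μ in neighborhoods of those points, and all reception events involved are sub-threshold (i.e. the points τ, H_ε(τ), H_{2ε}(τ), τ + H_{3ε}(τ) and their images lie in [0,1]). Then the first nonzero eigenvalue of the Jacobian of the return map of the S₄×S₁ cluster periodic orbit, λ₁ = (−1 + (1 + H_ε'(τ)·H_ε'(H_ε(τ)))·H_ε'(H_{2ε}(τ)))·H_ε'(τ + H_{3ε}(τ)), is strictly greater than 1. -/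
/-!
Differentiating `U (H x) = U x + μ` gives `H'(x) = U'(x) / U'(H x)`. Since `U` is increasing,
`H x > x`, and since `U'` is decreasing, this ratio exceeds 1. The eigenvalue is increasing in
each of the four derivatives it involves and equals 1 when all of them equal 1.
-/

open Set Filter Topology

theorem one_lt_deriv_of_comp_eq_add_const {U H : ℝ → ℝ} {s : Set ℝ} {μ x : ℝ}
    (hmono : MonotoneOn U s) (hanti : StrictAntiOn (deriv U) s) (hpos : 0 < deriv U (H x))
    (hμ : 0 < μ) (hx : x ∈ s) (hHx : H x ∈ s) (hUd : DifferentiableAt ℝ U (H x))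
    (hd : DifferentiableAt ℝ H x) (hrel : ∀ᶠ y in 𝓝 x, U (H y) = U y + μ) :
    1 < deriv H x := by
  have hlt : x < H x := by
    by_contra! hle
    linarith [hmono hHx hx hle, hrel.self_of_nhds]
  have hchain : deriv U (H x) * deriv H x = deriv U x := by
    rw [← deriv_comp x hUd hd, ← deriv_add_const (f := U) μ]
    exact Filter.EventuallyEq.deriv_eq hrel
  have hdec : deriv U (H x) * 1 < deriv U (H x) * deriv H x := by
    rw [mul_one, hchain]
    exact hanti hx hHx hlt
  exact lt_of_mul_lt_mul_left hdec hpos.le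

theorem one_lt_neg_one_add_one_add_mul_mul_mul {a b c d : ℝ}
    (ha : 1 < a) (hb : 1 < b) (hc : 1 < c) (hd : 1 < d) :
    1 < (-1 + (1 + a * b) * c) * d := by
  have hab : 1 < a * b := one_lt_mul_of_lt_of_le ha hb.le
  have habc : 1 < -1 + (1 + a * b) * c := by nlinarith
  exact one_lt_mul_of_lt_of_le habc hd.le

theorem s4s1_eigenvalue_one_gt_one_general
    (U Hε H2ε H3ε : ℝ → ℝ) (ε τ : ℝ)
    (hU : ContDiff ℝ 2 U)
    (hU' : ∀ x ∈ Set.Icc (0:ℝ) 1, 0 < deriv U x)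
    (hU'' : ∀ x ∈ Set.Icc (0:ℝ) 1, deriv (deriv U) x < 0)
    (hε : 0 < ε) (hτ : τ ∈ Set.Ioo (0:ℝ) 1)
    -- defining relations in neighborhoods of the evaluation points
    (hrel1 : ∀ᶠ x in nhds τ, U (Hε x) = U x + ε)
    (hrel2 : ∀ᶠ x in nhds (Hε τ), U (Hε x) = U x + ε)
    (hrel3 : ∀ᶠ x in nhds (H2ε τ), U (Hε x) = U x + ε)
    (hrel4 : ∀ᶠ x in nhds (τ + H3ε τ), U (Hε x) = U x + ε)
    -- all reception events are sub-threshold: points and images lie in [0,1]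
    (hm1 : Hε τ ∈ Set.Icc (0:ℝ) 1)
    (hm2 : H2ε τ ∈ Set.Icc (0:ℝ) 1)
    (hm4 : Hε (Hε τ) ∈ Set.Icc (0:ℝ) 1)
    (hm5 : Hε (H2ε τ) ∈ Set.Icc (0:ℝ) 1)
    (hm6 : τ + H3ε τ ∈ Set.Icc (0:ℝ) 1)
    (hm7 : Hε (τ + H3ε τ) ∈ Set.Icc (0:ℝ) 1)
    -- differentiability at the evaluation points
    (hd1 : DifferentiableAt ℝ Hε τ)
    (hd2 : DifferentiableAt ℝ Hε (Hε τ))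
    (hd3 : DifferentiableAt ℝ Hε (H2ε τ))
    (hd4 : DifferentiableAt ℝ Hε (τ + H3ε τ)) :
    1 < (-1 + (1 + deriv Hε τ * deriv Hε (Hε τ)) * deriv Hε (H2ε τ)) *
        deriv Hε (τ + H3ε τ) := by
  have hUd : Differentiable ℝ U := hU.differentiable (by norm_num)
  have hmono : MonotoneOn U (Icc 0 1) :=
    (strictMonoOn_of_deriv_pos (convex_Icc 0 1) hUd.continuous.continuousOn
      fun y hy ↦ hU' y (interior_subset hy)).monotoneOn
  have hanti : StrictAntiOn (deriv U) (Icc 0 1) :=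
    strictAntiOn_of_deriv_neg (convex_Icc 0 1) (hU.continuous_deriv (by norm_num)).continuousOn
      fun y hy ↦ hU'' y (interior_subset hy)
  have key : ∀ x ∈ Icc (0:ℝ) 1, Hε x ∈ Icc (0:ℝ) 1 → (∀ᶠ y in 𝓝 x, U (Hε y) = U y + ε) →
      DifferentiableAt ℝ Hε x → 1 < deriv Hε x := fun x hx hHx hrel hd ↦
    one_lt_deriv_of_comp_eq_add_const hmono hanti (hU' _ hHx) hε hx hHx (hUd _) hd hrel
  exact one_lt_neg_one_add_one_add_mul_mul_mul (key τ (Ioo_subset_Icc_self hτ) hm1 hrel1 hd1)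
    (key _ hm1 hm4 hrel2 hd2) (key _ hm2 hm5 hrel3 hd3) (key _ hm6 hm7 hrel4 hd4)

/-- The first nonzero eigenvalue of the Jacobian of the return map of the `S₄ × S₁` cluster
periodic orbit, `λ₁ = (-1 + (1 + Hε'(τ) Hε'(Hε(τ))) Hε'(H2ε(τ))) Hε'(τ + H3ε(τ))`,
is strictly greater than 1. -/
theorem s4s1_eigenvalue_one_gt_one
    (U Hε H2ε H3ε : ℝ → ℝ) (ε τ : ℝ)
    (hU : ContDiff ℝ 2 U) (hU0 : U 0 = 0) (hU1 : U 1 = 1)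
    (hU' : ∀ x ∈ Set.Icc (0:ℝ) 1, 0 < deriv U x)
    (hU'' : ∀ x ∈ Set.Icc (0:ℝ) 1, deriv (deriv U) x < 0)
    (hε : 0 < ε) (hτ : τ ∈ Set.Ioo (0:ℝ) 1)
    -- defining relations in neighborhoods of the evaluation points
    (hrel1 : ∀ᶠ x in nhds τ, U (Hε x) = U x + ε)
    (hrel2 : ∀ᶠ x in nhds (Hε τ), U (Hε x) = U x + ε)
    (hrel3 : ∀ᶠ x in nhds (H2ε τ), U (Hε x) = U x + ε)
    (hrel4 : ∀ᶠ x in nhds (τ + H3ε τ), U (Hε x) = U x + ε)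
    (hrel5 : ∀ᶠ x in nhds τ, U (H2ε x) = U x + 2 * ε)
    (hrel6 : ∀ᶠ x in nhds τ, U (H3ε x) = U x + 3 * ε)
    -- all reception events are sub-threshold: points and images lie in [0,1]
    (hm1 : Hε τ ∈ Set.Icc (0:ℝ) 1)
    (hm2 : H2ε τ ∈ Set.Icc (0:ℝ) 1)
    (hm3 : H3ε τ ∈ Set.Icc (0:ℝ) 1)
    (hm4 : Hε (Hε τ) ∈ Set.Icc (0:ℝ) 1)
    (hm5 : Hε (H2ε τ) ∈ Set.Icc (0:ℝ) 1)
    (hm6 : τ + H3ε τ ∈ Set.Icc (0:ℝ) 1)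
    (hm7 : Hε (τ + H3ε τ) ∈ Set.Icc (0:ℝ) 1)
    -- differentiability at the evaluation points
    (hd1 : DifferentiableAt ℝ Hε τ)
    (hd2 : DifferentiableAt ℝ Hε (Hε τ))
    (hd3 : DifferentiableAt ℝ Hε (H2ε τ))
    (hd4 : DifferentiableAt ℝ Hε (τ + H3ε τ)) :
    1 < (-1 + (1 + deriv Hε τ * deriv Hε (Hε τ)) * deriv Hε (H2ε τ)) *
        deriv Hε (τ + H3ε τ) :=
  s4s1_eigenvalue_one_gt_one_general U Hε H2ε H3ε ε τ hU hU' hU'' hε hτ hrel1 hrel2 hrel3 hrel4 hm1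
    hm2 hm4 hm5 hm6 hm7 hd1 hd2 hd3 hd4
end

section
/- Let ε > 0 and τ ∈ (0,1). Suppose H_ε, H_{2ε}, H_{3ε} are differentiable at the points where they are evaluated below, satisfy their defining relations U(H_μ(x)) = U(x) + μ in neighborhoods of those points, and all reception events involved are sub-threshold (i.e. the points τ, H_ε(τ), H_{2ε}(τ), τ + H_{3ε}(τ) and their images lie in [0,1]). Then the second nonzero eigenvalue of the Jacobian of the return map of the S₄×S₁ cluster periodic orbit, λ₂ = (−1 + (1 + H_ε'(τ))·H_ε'(H_ε(τ)))·H_ε'(H_{2ε}(τ))·H_ε'(τ + H_{3ε}(τ)), is strictly greater than 1. -/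
/-!
Differentiating `U (H x) = U x + ε` gives `U'(H a) · H'(a) = U'(a)`. Since `U` is increasing,
`H a > a`, and since `U'` is positive and strictly decreasing, `U'(a) > U'(H a)`; hence
`H'(a) > 1` at every sub-threshold reception point. All four derivative factors in `λ₂` therefore
exceed `1`, and then so does `λ₂`, because `-1 + (1 + a) b > 1` whenever `a, b > 1`.
-/

open Filter Set Topology

lemma lt_of_comp_eq_add {U H : ℝ → ℝ} {s : Set ℝ} {ε a : ℝ} (hU : MonotoneOn U s)
    (hε : 0 < ε) (ha : a ∈ s) (hHa : H a ∈ s) (hrel : U (H a) = U a + ε) : a < H a := by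
  by_contra! hle
  linarith [hU hHa ha hle]

lemma deriv_comp_mul_eq_of_eventually_comp_eq_add {U H : ℝ → ℝ} {ε a : ℝ}
    (hrel : ∀ᶠ x in 𝓝 a, U (H x) = U x + ε) (hU : DifferentiableAt ℝ U (H a))
    (hH : DifferentiableAt ℝ H a) : deriv U (H a) * deriv H a = deriv U a := by
  calc deriv U (H a) * deriv H a = deriv (fun x => U (H x)) a := (deriv_comp a hU hH).symm
    _ = deriv (fun x => U x + ε) a := EventuallyEq.deriv_eq hrel
    _ = deriv U a := deriv_add_const ε

lemma one_lt_deriv_of_eventually_comp_eq_add {U H : ℝ → ℝ} {s : Set ℝ} {ε a : ℝ}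
    (hmono : MonotoneOn U s) (hanti : StrictAntiOn (deriv U) s) (hε : 0 < ε)
    (ha : a ∈ s) (hHa : H a ∈ s) (hpos : 0 < deriv U (H a))
    (hrel : ∀ᶠ x in 𝓝 a, U (H x) = U x + ε) (hU : DifferentiableAt ℝ U (H a))
    (hH : DifferentiableAt ℝ H a) : 1 < deriv H a := by
  have hlt : a < H a := lt_of_comp_eq_add hmono hε ha hHa hrel.self_of_nhds
  have hderiv : deriv U (H a) < deriv U a := hanti ha hHa hlt
  rw [← deriv_comp_mul_eq_of_eventually_comp_eq_add hrel hU hH] at hderiv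
  exact (lt_mul_iff_one_lt_right hpos).mp hderiv

lemma one_lt_neg_one_add_one_add_mul {a b : ℝ} (ha : 1 < a) (hb : 1 < b) :
    1 < -1 + (1 + a) * b := by
  nlinarith

theorem s4s1_eigenvalue_two_gt_one_general
    (U Hε H2ε H3ε : ℝ → ℝ) (ε τ : ℝ)
    (hU : ContDiff ℝ 2 U)
    (hU' : ∀ x ∈ Set.Icc (0:ℝ) 1, 0 < deriv U x)
    (hU'' : ∀ x ∈ Set.Icc (0:ℝ) 1, deriv (deriv U) x < 0)
    (hε : 0 < ε) (hτ : τ ∈ Set.Ioo (0:ℝ) 1)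
    -- defining relations in neighborhoods of the evaluation points
    (hrel1 : ∀ᶠ x in nhds τ, U (Hε x) = U x + ε)
    (hrel2 : ∀ᶠ x in nhds (Hε τ), U (Hε x) = U x + ε)
    (hrel3 : ∀ᶠ x in nhds (H2ε τ), U (Hε x) = U x + ε)
    (hrel4 : ∀ᶠ x in nhds (τ + H3ε τ), U (Hε x) = U x + ε)
    -- all reception events are sub-threshold: points and images lie in [0,1]
    (hm1 : Hε τ ∈ Set.Icc (0:ℝ) 1)
    (hm2 : H2ε τ ∈ Set.Icc (0:ℝ) 1)
    (hm4 : Hε (Hε τ) ∈ Set.Icc (0:ℝ) 1)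
    (hm5 : Hε (H2ε τ) ∈ Set.Icc (0:ℝ) 1)
    (hm6 : τ + H3ε τ ∈ Set.Icc (0:ℝ) 1)
    (hm7 : Hε (τ + H3ε τ) ∈ Set.Icc (0:ℝ) 1)
    -- differentiability at the evaluation points
    (hd1 : DifferentiableAt ℝ Hε τ)
    (hd2 : DifferentiableAt ℝ Hε (Hε τ))
    (hd3 : DifferentiableAt ℝ Hε (H2ε τ))
    (hd4 : DifferentiableAt ℝ Hε (τ + H3ε τ)) :
    1 < (-1 + (1 + deriv Hε τ) * deriv Hε (Hε τ)) * deriv Hε (H2ε τ) *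
        deriv Hε (τ + H3ε τ) := by
  have hdiff : Differentiable ℝ U := hU.differentiable (by norm_num)
  have hmono : StrictMonoOn U (Icc 0 1) :=
    strictMonoOn_of_deriv_pos (convex_Icc 0 1) hdiff.continuous.continuousOn
      fun x hx => hU' x (interior_subset hx)
  have hanti : StrictAntiOn (deriv U) (Icc 0 1) :=
    strictAntiOn_of_deriv_neg (convex_Icc 0 1) (hU.continuous_deriv one_le_two).continuousOn
      fun x hx => hU'' x (interior_subset hx)
  have one_lt_deriv : ∀ a ∈ Icc (0:ℝ) 1, Hε a ∈ Icc (0:ℝ) 1 →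
      (∀ᶠ x in 𝓝 a, U (Hε x) = U x + ε) → DifferentiableAt ℝ Hε a →
      1 < deriv Hε a :=
    fun a ha hHa hrel hd => one_lt_deriv_of_eventually_comp_eq_add hmono.monotoneOn hanti hε ha
      hHa (hU' _ hHa) hrel (hdiff _) hd
  have h1 := one_lt_deriv τ ⟨hτ.1.le, hτ.2.le⟩ hm1 hrel1 hd1
  have h2 := one_lt_deriv _ hm1 hm4 hrel2 hd2
  have h3 := one_lt_deriv _ hm2 hm5 hrel3 hd3
  have h4 := one_lt_deriv _ hm6 hm7 hrel4 hd4
  have h12 := one_lt_neg_one_add_one_add_mul h1 h2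
  exact one_lt_mul_of_le_of_lt (one_lt_mul_of_le_of_lt h12.le h3).le h4

/-- The second nonzero eigenvalue of the Jacobian of the return map of the `S₄ × S₁` cluster
periodic orbit, `λ₂ = (-1 + (1 + Hε'(τ)) Hε'(Hε(τ))) Hε'(H2ε(τ)) Hε'(τ + H3ε(τ))`,
is strictly greater than 1. -/
theorem s4s1_eigenvalue_two_gt_one
    (U Hε H2ε H3ε : ℝ → ℝ) (ε τ : ℝ)
    (hU : ContDiff ℝ 2 U) (hU0 : U 0 = 0) (hU1 : U 1 = 1)
    (hU' : ∀ x ∈ Set.Icc (0:ℝ) 1, 0 < deriv U x)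
    (hU'' : ∀ x ∈ Set.Icc (0:ℝ) 1, deriv (deriv U) x < 0)
    (hε : 0 < ε) (hτ : τ ∈ Set.Ioo (0:ℝ) 1)
    -- defining relations in neighborhoods of the evaluation points
    (hrel1 : ∀ᶠ x in nhds τ, U (Hε x) = U x + ε)
    (hrel2 : ∀ᶠ x in nhds (Hε τ), U (Hε x) = U x + ε)
    (hrel3 : ∀ᶠ x in nhds (H2ε τ), U (Hε x) = U x + ε)
    (hrel4 : ∀ᶠ x in nhds (τ + H3ε τ), U (Hε x) = U x + ε)
    (hrel5 : ∀ᶠ x in nhds τ, U (H2ε x) = U x + 2 * ε)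
    (hrel6 : ∀ᶠ x in nhds τ, U (H3ε x) = U x + 3 * ε)
    -- all reception events are sub-threshold: points and images lie in [0,1]
    (hm1 : Hε τ ∈ Set.Icc (0:ℝ) 1)
    (hm2 : H2ε τ ∈ Set.Icc (0:ℝ) 1)
    (hm3 : H3ε τ ∈ Set.Icc (0:ℝ) 1)
    (hm4 : Hε (Hε τ) ∈ Set.Icc (0:ℝ) 1)
    (hm5 : Hε (H2ε τ) ∈ Set.Icc (0:ℝ) 1)
    (hm6 : τ + H3ε τ ∈ Set.Icc (0:ℝ) 1)
    (hm7 : Hε (τ + H3ε τ) ∈ Set.Icc (0:ℝ) 1)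
    -- differentiability at the evaluation points
    (hd1 : DifferentiableAt ℝ Hε τ)
    (hd2 : DifferentiableAt ℝ Hε (Hε τ))
    (hd3 : DifferentiableAt ℝ Hε (H2ε τ))
    (hd4 : DifferentiableAt ℝ Hε (τ + H3ε τ)) :
    1 < (-1 + (1 + deriv Hε τ) * deriv Hε (Hε τ)) * deriv Hε (H2ε τ) *
        deriv Hε (τ + H3ε τ) :=
  s4s1_eigenvalue_two_gt_one_general U Hε H2ε H3ε ε τ hU hU' hU'' hε hτ hrel1 hrel2 hrel3 hrel4 hm1
    hm2 hm4 hm5 hm6 hm7 hd1 hd2 hd3 hd4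
end

section
/- Let ε > 0 and τ ∈ (0,1). Suppose H_ε, H_{2ε}, H_{3ε} are differentiable at the points where they are evaluated below, satisfy their defining relations U(H_μ(x)) = U(x) + μ in neighborhoods of those points, and all reception events involved are sub-threshold (i.e. the points τ, H_ε(τ), H_{2ε}(τ), τ + H_{3ε}(τ) and their images lie in [0,1]). Then the third nonzero eigenvalue of the Jacobian of the return map of the S₄×S₁ cluster periodic orbit, λ₃ = (−1 + 2·H_ε'(τ))·H_ε'(H_ε(τ))·H_ε'(H_{2ε}(τ))·H_ε'(τ + H_{3ε}(τ)), is strictly greater than 1. -/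
/-!
Differentiating `U ∘ H = U + ε` gives `U'(H x) · H'(x) = U'(x)`. Since `U` is increasing,
`H x > x`, and since `U'` is positive and strictly decreasing, `U'(H x) < U'(x)`, so `H'(x) > 1`.
Every factor of `λ₃` therefore exceeds `1`, the first one because `-1 + 2a > 1` for `a > 1`.
-/

open Set Filter Topology

theorem deriv_mul_deriv_eq_of_eventually_comp_eq_add_const {U H : ℝ → ℝ} {c x : ℝ}
    (hrel : ∀ᶠ y in 𝓝 x, U (H y) = U y + c)
    (hU : DifferentiableAt ℝ U (H x)) (hH : DifferentiableAt ℝ H x) :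
    deriv U (H x) * deriv H x = deriv U x := by
  have h : deriv (U ∘ H) x = deriv (fun y => U y + c) x :=
    EventuallyEq.deriv_eq hrel
  rwa [deriv_add_const, deriv_comp x hU hH] at h

theorem one_lt_deriv_of_eventually_comp_eq_add_const {U H : ℝ → ℝ} {s : Set ℝ} {ε x : ℝ}
    (hmono : StrictMonoOn U s) (hanti : StrictAntiOn (deriv U) s)
    (hx : x ∈ s) (hHx : H x ∈ s) (hε : 0 < ε) (hpos : 0 < deriv U (H x))
    (hU : DifferentiableAt ℝ U (H x)) (hH : DifferentiableAt ℝ H x)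
    (hrel : ∀ᶠ y in 𝓝 x, U (H y) = U y + ε) : 1 < deriv H x := by
  have hlt : x < H x := (hmono.lt_iff_lt hx hHx).1 (by linarith [hrel.self_of_nhds])
  have hchain := deriv_mul_deriv_eq_of_eventually_comp_eq_add_const hrel hU hH
  refine (lt_mul_iff_one_lt_right hpos).1 ?_
  rw [hchain]
  exact hanti hx hHx hlt

theorem s4s1_eigenvalue_three_gt_one_general
    (U Hε H2ε H3ε : ℝ → ℝ) (ε τ : ℝ)
    (hU : ContDiff ℝ 2 U)
    (hU' : ∀ x ∈ Set.Icc (0:ℝ) 1, 0 < deriv U x)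
    (hU'' : ∀ x ∈ Set.Icc (0:ℝ) 1, deriv (deriv U) x < 0)
    (hε : 0 < ε) (hτ : τ ∈ Set.Ioo (0:ℝ) 1)
    -- defining relations in neighborhoods of the evaluation points
    (hrel1 : ∀ᶠ x in nhds τ, U (Hε x) = U x + ε)
    (hrel2 : ∀ᶠ x in nhds (Hε τ), U (Hε x) = U x + ε)
    (hrel3 : ∀ᶠ x in nhds (H2ε τ), U (Hε x) = U x + ε)
    (hrel4 : ∀ᶠ x in nhds (τ + H3ε τ), U (Hε x) = U x + ε)
    -- all reception events are sub-threshold: points and images lie in [0,1]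
    (hm1 : Hε τ ∈ Set.Icc (0:ℝ) 1)
    (hm2 : H2ε τ ∈ Set.Icc (0:ℝ) 1)
    (hm4 : Hε (Hε τ) ∈ Set.Icc (0:ℝ) 1)
    (hm5 : Hε (H2ε τ) ∈ Set.Icc (0:ℝ) 1)
    (hm6 : τ + H3ε τ ∈ Set.Icc (0:ℝ) 1)
    (hm7 : Hε (τ + H3ε τ) ∈ Set.Icc (0:ℝ) 1)
    -- differentiability at the evaluation points
    (hd1 : DifferentiableAt ℝ Hε τ)
    (hd2 : DifferentiableAt ℝ Hε (Hε τ))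
    (hd3 : DifferentiableAt ℝ Hε (H2ε τ))
    (hd4 : DifferentiableAt ℝ Hε (τ + H3ε τ)) :
    1 < (-1 + 2 * deriv Hε τ) * deriv Hε (Hε τ) * deriv Hε (H2ε τ) *
        deriv Hε (τ + H3ε τ) := by
  have hmono : StrictMonoOn U (Icc 0 1) :=
    strictMonoOn_of_deriv_pos (convex_Icc 0 1) hU.continuous.continuousOn
      fun y hy => hU' y (interior_subset hy)
  have hanti : StrictAntiOn (deriv U) (Icc 0 1) :=
    strictAntiOn_of_deriv_neg (convex_Icc 0 1) (hU.continuous_deriv one_le_two).continuousOn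
      fun y hy => hU'' y (interior_subset hy)
  have one_lt_deriv : ∀ x ∈ Icc (0:ℝ) 1, Hε x ∈ Icc (0:ℝ) 1 →
      (∀ᶠ y in 𝓝 x, U (Hε y) = U y + ε) → DifferentiableAt ℝ Hε x → 1 < deriv Hε x :=
    fun x hx hHx hrel hd => one_lt_deriv_of_eventually_comp_eq_add_const hmono hanti hx hHx hε
      (hU' _ hHx) (hU.differentiable two_ne_zero _) hd hrel
  have h₁ : 1 < -1 + 2 * deriv Hε τ := by
    linarith [one_lt_deriv τ (Ioo_subset_Icc_self hτ) hm1 hrel1 hd1]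
  have h₂ := one_lt_deriv _ hm1 hm4 hrel2 hd2
  have h₃ := one_lt_deriv _ hm2 hm5 hrel3 hd3
  have h₄ := one_lt_deriv _ hm6 hm7 hrel4 hd4
  exact one_lt_mul_of_lt_of_le (one_lt_mul_of_lt_of_le (one_lt_mul_of_lt_of_le h₁ h₂.le) h₃.le)
    h₄.le

/-- The third nonzero eigenvalue of the Jacobian of the return map of the `S₄ × S₁` cluster
periodic orbit, `λ₃ = (-1 + 2 Hε'(τ)) Hε'(Hε(τ)) Hε'(H2ε(τ)) Hε'(τ + H3ε(τ))`,
is strictly greater than 1. -/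
theorem s4s1_eigenvalue_three_gt_one
    (U Hε H2ε H3ε : ℝ → ℝ) (ε τ : ℝ)
    (hU : ContDiff ℝ 2 U) (hU0 : U 0 = 0) (hU1 : U 1 = 1)
    (hU' : ∀ x ∈ Set.Icc (0:ℝ) 1, 0 < deriv U x)
    (hU'' : ∀ x ∈ Set.Icc (0:ℝ) 1, deriv (deriv U) x < 0)
    (hε : 0 < ε) (hτ : τ ∈ Set.Ioo (0:ℝ) 1)
    -- defining relations in neighborhoods of the evaluation points
    (hrel1 : ∀ᶠ x in nhds τ, U (Hε x) = U x + ε)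
    (hrel2 : ∀ᶠ x in nhds (Hε τ), U (Hε x) = U x + ε)
    (hrel3 : ∀ᶠ x in nhds (H2ε τ), U (Hε x) = U x + ε)
    (hrel4 : ∀ᶠ x in nhds (τ + H3ε τ), U (Hε x) = U x + ε)
    (hrel5 : ∀ᶠ x in nhds τ, U (H2ε x) = U x + 2 * ε)
    (hrel6 : ∀ᶠ x in nhds τ, U (H3ε x) = U x + 3 * ε)
    -- all reception events are sub-threshold: points and images lie in [0,1]
    (hm1 : Hε τ ∈ Set.Icc (0:ℝ) 1)
    (hm2 : H2ε τ ∈ Set.Icc (0:ℝ) 1)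
    (hm3 : H3ε τ ∈ Set.Icc (0:ℝ) 1)
    (hm4 : Hε (Hε τ) ∈ Set.Icc (0:ℝ) 1)
    (hm5 : Hε (H2ε τ) ∈ Set.Icc (0:ℝ) 1)
    (hm6 : τ + H3ε τ ∈ Set.Icc (0:ℝ) 1)
    (hm7 : Hε (τ + H3ε τ) ∈ Set.Icc (0:ℝ) 1)
    -- differentiability at the evaluation points
    (hd1 : DifferentiableAt ℝ Hε τ)
    (hd2 : DifferentiableAt ℝ Hε (Hε τ))
    (hd3 : DifferentiableAt ℝ Hε (H2ε τ))
    (hd4 : DifferentiableAt ℝ Hε (τ + H3ε τ)) :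
    1 < (-1 + 2 * deriv Hε τ) * deriv Hε (Hε τ) * deriv Hε (H2ε τ) *
        deriv Hε (τ + H3ε τ) :=
  s4s1_eigenvalue_three_gt_one_general U Hε H2ε H3ε ε τ hU hU' hU'' hε hτ hrel1 hrel2 hrel3 hrel4
    hm1 hm2 hm4 hm5 hm6 hm7 hd1 hd2 hd3 hd4
end

section
/- Consider states s = (P, Q, t) where P, Q are disjoint 2-element subsets of Fin 5 and t is the remaining element (P the unstable S₂ cluster, Q the stable S₂ cluster, t the singleton), and define a transition: choosing a perturbed element p ∈ P with P = {p, q}, the successor state is (Q, {q, t}, p). Then every closed path in this transition digraph has length at least 5: if s₀, s₁, …, s_k is any sequence with k ≥ 1 in which each s_{m+1} is a transition of s_m and s_k = s₀, then k ≥ 5. -/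
/-- An `S₂ × S₂ × S₁` cluster state of 5 oscillators: `P` is the unstable `S₂` cluster,
`Q` the stable `S₂` cluster, and `t` the singleton element. -/
structure S2S2S1State where
  P : Finset (Fin 5)
  Q : Finset (Fin 5)
  t : Fin 5
  hP : P.card = 2
  hQ : Q.card = 2
  hPQ : Disjoint P Q
  ht : t ∉ P ∪ Q

/-- The perturbation-induced transition rule: choosing a perturbed element `p ∈ P` with
`P = {p, q}`, the successor state has unstable cluster `Q`, stable cluster `{q, t}`,
and singleton `p`. -/
def S2S2S1Step (s s' : S2S2S1State) : Prop :=
  ∃ p q : Fin 5, p ≠ q ∧ s.P = {p, q} ∧ s'.P = s.Q ∧ s'.Q = {q, s.t} ∧ s'.t = p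

/-!
Since the unstable cluster of the successor is the old stable cluster (`P' = Q`), the unstable
cluster of `s j` contains an element outside `P₀` for every `1 ≤ j ≤ 4`: for `j = 1` all of
`Q₀`; for `j = 2` the singleton `t₀`; for `j = 3` the unperturbed element of `P₁ = Q₀`; and for
`j = 4` the singleton `t₂`, which was the perturbed element of `P₁ = Q₀`. Hence `s j ≠ s 0`.
-/

namespace S2S2S1State

theorem notMem_P_of_mem_Q (s : S2S2S1State) {x : Fin 5} (hx : x ∈ s.Q) : x ∉ s.P :=
  Finset.disjoint_right.mp s.hPQ hx

theorem t_notMem_P (s : S2S2S1State) : s.t ∉ s.P :=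
  fun h => s.ht (Finset.mem_union_left _ h)

theorem Q_nonempty (s : S2S2S1State) : s.Q.Nonempty :=
  Finset.card_pos.mp (by rw [s.hQ]; decide)

end S2S2S1State

namespace S2S2S1Step

variable {s s' : S2S2S1State}

theorem P_eq (h : S2S2S1Step s s') : s'.P = s.Q := by
  obtain ⟨_, _, _, _, hP, _⟩ := h
  exact hP

theorem t_mem_Q_succ (h : S2S2S1Step s s') : s.t ∈ s'.Q := by
  obtain ⟨_, _, _, _, _, hQ, _⟩ := h
  simp [hQ]

theorem t_succ_mem_P (h : S2S2S1Step s s') : s'.t ∈ s.P := by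
  obtain ⟨_, _, _, hP, _, _, ht⟩ := h
  simp [hP, ht]

theorem exists_mem_P_mem_Q (h : S2S2S1Step s s') : ∃ x ∈ s.P, x ∈ s'.Q := by
  obtain ⟨_, q, _, hP, _, hQ, _⟩ := h
  exact ⟨q, by simp [hP], by simp [hQ]⟩

end S2S2S1Step

theorem exists_mem_P_notMem_P_of_path (k : ℕ) (s : ℕ → S2S2S1State) (hk : 1 ≤ k) (hk4 : k ≤ 4)
    (hstep : ∀ m, m < k → S2S2S1Step (s m) (s (m + 1))) :
    ∃ x ∈ (s k).P, x ∉ (s 0).P := by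
  interval_cases k
  · obtain ⟨x, hx⟩ := (s 0).Q_nonempty
    exact ⟨x, (hstep 0 (by norm_num)).P_eq ▸ hx, (s 0).notMem_P_of_mem_Q hx⟩
  · exact ⟨(s 0).t, (hstep 1 (by norm_num)).P_eq ▸ (hstep 0 (by norm_num)).t_mem_Q_succ,
      (s 0).t_notMem_P⟩
  · obtain ⟨x, hx1, hx2⟩ := (hstep 1 (by norm_num)).exists_mem_P_mem_Q
    exact ⟨x, (hstep 2 (by norm_num)).P_eq ▸ hx2,
      (s 0).notMem_P_of_mem_Q ((hstep 0 (by norm_num)).P_eq ▸ hx1)⟩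
  · exact ⟨(s 2).t, (hstep 3 (by norm_num)).P_eq ▸ (hstep 2 (by norm_num)).t_mem_Q_succ,
      (s 0).notMem_P_of_mem_Q
        ((hstep 0 (by norm_num)).P_eq ▸ (hstep 1 (by norm_num)).t_succ_mem_P)⟩

/-- Every closed path in the `S₂ × S₂ × S₁` transition digraph has length at least 5. -/
theorem s2s2s1_closed_path_length_ge_five
    (k : ℕ) (s : ℕ → S2S2S1State)
    (hk : 1 ≤ k)
    (hstep : ∀ m, m < k → S2S2S1Step (s m) (s (m + 1)))
    (hclosed : s k = s 0) :
    5 ≤ k := by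
  by_contra! hk5
  obtain ⟨x, hx, hx0⟩ := exists_mem_P_notMem_P_of_path k s hk (by omega) hstep
  exact hx0 (hclosed ▸ hx)
end
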